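/- arXiv:1404.5043 — 2 statements merged into one kernel-verified Lean document; each statement's English description precedes it below -/
import Mathlib

section
/- Let C ⊆ S^q be a convolutional code admitting a polynomial resolution (G_l, ..., G_1) with the PD property, with column degree table (a_l, ..., a_1) and sizes p_l, ..., p_1. Then for every d ≥ 0, the Hilbert function of C satisfies HF(C,d) = dim_F C_{≤d} = Σ_{i=1}^{l} (−1)^{i−1} Σ_{j=1}^{p_i} C(d − a_i(j) + n, n), where C(m,n) denotes the binomial coefficient, taken to be 0 when m < n (i.e., when d − a_i(j) < 0). -/
open MvPolynomial

noncomputable section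
open scoped Classical

/-- Polynomials of total degree at most `d`. -/
def polyDegLE (F : Type) [Field F] (n : ℕ) (d : ℤ) :
    Submodule F (MvPolynomial (Fin n) F) where
  carrier := {f | ∀ m ∈ f.support, ((m.sum fun _ e => e : ℕ) : ℤ) ≤ d}
  add_mem' := fun hf hg m hm =>
    (Finset.mem_union.1 (MvPolynomial.support_add hm)).elim (hf m) (hg m)
  zero_mem' := by simp
  smul_mem' := fun c f hf m hm => hf m (MvPolynomial.support_smul hm)

/-- The filtration `S^p[-a]_{≤ d}`. -/
def filt (F : Type) [Field F] (n p : ℕ) (a : Fin p → ℕ) (d : ℤ) :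
    Submodule F (Fin p → MvPolynomial (Fin n) F) :=
  Submodule.pi Set.univ fun i => polyDegLE F n (d - a i)

/-- `C_{≤d} = C ∩ S^q_{≤d}`, as an `F`-subspace of `S^q`. -/
def codeLE (F : Type) [Field F] (n q : ℕ)
    (C : Submodule (MvPolynomial (Fin n) F) (Fin q → MvPolynomial (Fin n) F))
    (d : ℤ) : Submodule F (Fin q → MvPolynomial (Fin n) F) :=
  (C.restrictScalars F) ⊓ filt F n q (fun _ => 0) d

/-- The `a`-degree of the `j`-th column of a matrix `G` with no zero columns:
`deg_a(G_{·j}) = max_i (a i + deg (G i j))`, the maximum ranging over the nonzero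
entries of the column. -/
def colDeg {F : Type} [Field F] {n p r : ℕ} (a : Fin p → ℕ)
    (G : Matrix (Fin p) (Fin r) (MvPolynomial (Fin n) F)) (j : Fin r) : ℕ :=
  Finset.univ.sup fun i => if G i j = 0 then 0 else a i + (G i j).totalDegree

/-!
Truncating the resolution at degree `d` leaves an exact sequence of finite-dimensional
`F`-spaces (the column-degree recursion is exactly what makes `G_{i+1}` send
`S^{p_{i+1}}[-a_{i+1}]_{≤d}` into `S^{p_i}[-a_i]_{≤d}`), so rank–nullity along it expresses
`dim C_{≤d}` as the alternating sum of the dimensions of the `S^{p_i}[-a_i]_{≤d}`. Each of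
these is a product of spaces of polynomials of degree at most `d - a_i(j)`, whose dimension
`C(d - a_i(j) + n, n)` is a stars-and-bars count of monomials.
-/

open Module

-- Stars and bars after adding the slack coordinate `m - ∑ i, f i`.
theorem natCard_tuple_sum_le_eq_choose (n m : ℕ) :
    Nat.card {f : Fin n → ℕ // ∑ i, f i ≤ m} = (m + n).choose n := by
  let slack : {f : Fin n → ℕ // ∑ i, f i ≤ m} ≃ {f : Fin (n + 1) → ℕ // ∑ i, f i = m} :=
    { toFun := fun f => ⟨Fin.cons (m - ∑ i, f.1 i) f.1, by rw [Fin.sum_cons]; have := f.2; omega⟩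
      invFun := fun f => ⟨Fin.tail f.1, by
        have := f.2
        rw [Fin.sum_univ_succ] at this
        simp only [Fin.tail]
        omega⟩
      left_inv := fun f => by simp
      right_inv := fun ⟨f, hf⟩ => by
        rw [Fin.sum_univ_succ] at hf
        refine Subtype.ext (Eq.trans ?_ (Fin.cons_self_tail f))
        simp only [Fin.tail, ← hf, Nat.add_sub_cancel] }
  rw [Nat.card_congr (slack.trans (Sym.equivNatSumOfFintype _ m).symm), Nat.card_eq_fintype_card,
    Sym.card_sym_eq_choose, Fintype.card_fin, show n + 1 + m - 1 = m + n by omega,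
    Nat.choose_symm_add]

theorem MvPolynomial.finrank_restrictTotalDegree_fin (F : Type*) [Field F] (n m : ℕ) :
    finrank F (restrictTotalDegree (Fin n) F m) = (m + n).choose n := by
  rw [restrictTotalDegree, finrank_eq_nat_card_basis (basisRestrictSupport F _),
    ← natCard_tuple_sum_le_eq_choose]
  refine Nat.card_congr (Equiv.subtypeEquiv Finsupp.equivFunOnFinite fun s => ?_)
  simp [Finsupp.sum_fintype]

def Submodule.piUnivEquiv {R ι : Type*} [Semiring R] {M : ι → Type*}
    [∀ i, AddCommMonoid (M i)] [∀ i, Module R (M i)] (q : ∀ i, Submodule R (M i)) :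
    Submodule.pi Set.univ q ≃ₗ[R] ∀ i, q i where
  toFun x i := ⟨x.1 i, x.2 i (Set.mem_univ i)⟩
  map_add' _ _ := rfl
  map_smul' _ _ := rfl
  invFun y := ⟨fun i => y i, fun i _ => (y i).2⟩
  left_inv _ := rfl
  right_inv _ := rfl

theorem Submodule.finrank_map_add_finrank_inf_ker {K V V₂ : Type*} [DivisionRing K]
    [AddCommGroup V] [Module K V] [AddCommGroup V₂] [Module K V₂]
    (W : Submodule K V) [FiniteDimensional K W] (f : V →ₗ[K] V₂) :
    finrank K (W.map f) + finrank K (W ⊓ LinearMap.ker f : Submodule K V) = finrank K W := by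
  rw [← LinearMap.range_domRestrict, ← Submodule.map_comap_subtype,
    Submodule.finrank_map_subtype_eq, ← LinearMap.ker_domRestrict]
  exact (f.domRestrict W).finrank_range_add_finrank_ker

theorem sum_range_neg_one_pow_mul_eq_add {W K : ℕ → ℤ} {c : ℤ} (h₀ : W 0 = c + K 0) {m : ℕ}
    (hstep : ∀ i < m, W (i + 1) = K i + K (i + 1)) :
    ∑ i ∈ Finset.range (m + 1), (-1) ^ i * W i = c + (-1) ^ m * K m := by
  induction m with
  | zero => simp [h₀]
  | succ m ih =>
    rw [Finset.sum_range_succ, ih fun i hi => hstep i (by omega), hstep m (by omega)]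
    ring

section Filtration

open Matrix

variable {F : Type} [Field F] {n : ℕ}

theorem polyDegLE_natCast (m : ℕ) : polyDegLE F n m = restrictTotalDegree (Fin n) F m := by
  ext f
  simp only [restrictTotalDegree, restrictSupport, AddMonoidAlgebra.mem_supported]
  exact ⟨fun h s hs => by exact_mod_cast h s hs, fun h s hs => by exact_mod_cast h hs⟩

theorem polyDegLE_eq_bot {d : ℤ} (hd : d < 0) : polyDegLE F n d = ⊥ := by
  refine (Submodule.eq_bot_iff _).2 fun f hf => ?_
  by_contra hf0
  obtain ⟨s, hs⟩ := support_nonempty.2 hf0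
  have := hf s hs
  omega

instance (d : ℤ) : FiniteDimensional F (polyDegLE F n d) := by
  rcases lt_or_ge d 0 with hd | hd
  · rw [polyDegLE_eq_bot hd]
    infer_instance
  · rw [← Int.toNat_of_nonneg hd, polyDegLE_natCast]
    infer_instance

theorem finrank_polyDegLE_natCast_sub (d a : ℕ) :
    finrank F (polyDegLE F n ((d : ℤ) - a)) = if a ≤ d then (d - a + n).choose n else 0 := by
  split_ifs with h
  · rw [← Nat.cast_sub h, polyDegLE_natCast, finrank_restrictTotalDegree_fin]
  · rw [polyDegLE_eq_bot (by omega), finrank_bot]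

theorem polyDegLE_mono {d e : ℤ} (h : d ≤ e) : polyDegLE F n d ≤ polyDegLE F n e :=
  fun _ hf s hs => (hf s hs).trans h

theorem mem_polyDegLE_totalDegree (f : MvPolynomial (Fin n) F) :
    f ∈ polyDegLE F n f.totalDegree :=
  fun _ hs => Nat.cast_le.2 (le_totalDegree hs)

theorem mul_mem_polyDegLE {f g : MvPolynomial (Fin n) F} {d e : ℤ}
    (hf : f ∈ polyDegLE F n d) (hg : g ∈ polyDegLE F n e) : f * g ∈ polyDegLE F n (d + e) := by
  intro s hs
  obtain ⟨s₁, hs₁, s₂, hs₂, rfl⟩ := Finset.mem_add.1 (support_mul f g hs)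
  rw [Finsupp.sum_add_index' (fun _ => rfl) fun _ _ _ => rfl, Nat.cast_add]
  exact add_le_add (hf s₁ hs₁) (hg s₂ hs₂)

instance (p : ℕ) (a : Fin p → ℕ) (d : ℤ) : FiniteDimensional F (filt F n p a d) :=
  Module.Finite.equiv (Submodule.piUnivEquiv _).symm

theorem finrank_filt (p : ℕ) (a : Fin p → ℕ) (d : ℕ) :
    finrank F (filt F n p a d) = ∑ j, if a j ≤ d then (d - a j + n).choose n else 0 := by
  rw [filt, (Submodule.piUnivEquiv _).finrank_eq, finrank_pi_fintype]
  exact Finset.sum_congr rfl fun j _ => finrank_polyDegLE_natCast_sub d (a j)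

theorem add_totalDegree_le_colDeg {p r : ℕ} (a : Fin p → ℕ)
    (G : Matrix (Fin p) (Fin r) (MvPolynomial (Fin n) F)) {i : Fin p} {j : Fin r}
    (hG : G i j ≠ 0) : a i + (G i j).totalDegree ≤ colDeg a G j := by
  have h := Finset.le_sup (f := fun i => if G i j = 0 then 0 else a i + (G i j).totalDegree)
    (Finset.mem_univ i)
  rwa [if_neg hG] at h

theorem mulVec_mem_filt {p r : ℕ} {a : Fin p → ℕ} {b : Fin r → ℕ}
    (G : Matrix (Fin p) (Fin r) (MvPolynomial (Fin n) F)) (hb : ∀ j, colDeg a G j ≤ b j) {d : ℤ}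
    {f : Fin r → MvPolynomial (Fin n) F} (hf : f ∈ filt F n r b d) :
    G *ᵥ f ∈ filt F n p a d := by
  intro i _
  change ∑ j, G i j * f j ∈ polyDegLE F n (d - a i)
  refine Submodule.sum_mem _ fun j _ => ?_
  by_cases hG : G i j = 0
  · simp [hG]
  · have hdeg := (add_totalDegree_le_colDeg a G hG).trans (hb j)
    refine polyDegLE_mono ?_ (mul_mem_polyDegLE (mem_polyDegLE_totalDegree (G i j))
      (hf j (Set.mem_univ j)))
    omega

end Filtration

-- `G i` and `a i` are the paper's `G_{i+1}` and `a_i`; the code has length `q = p 0`.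
theorem hilbert_function_formula_general (F : Type) [Field F] (n : ℕ)
    (l : ℕ) (hl : 1 ≤ l) (p : ℕ → ℕ)
    (G : ∀ i : ℕ, Matrix (Fin (p i)) (Fin (p (i+1))) (MvPolynomial (Fin n) F))
    (a : ∀ i : ℕ, Fin (p i) → ℕ)
    (ha0 : ∀ j, a 0 j = 0)
    (harec : ∀ i, i + 1 ≤ l → ∀ j, a (i+1) j = colDeg (a i) (G i) j)
    (hcomplex : ∀ i, i + 2 ≤ l → ∀ y, (G i).mulVec ((G (i+1)).mulVec y) = 0)
    (C : Submodule (MvPolynomial (Fin n) F) (Fin (p 0) → MvPolynomial (Fin n) F))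
    (hC : LinearMap.range (G 0).mulVecLin = C)
    (hsurj : ∀ d : ℕ, ∀ c ∈ codeLE F n (p 0) C (d : ℤ),
      ∃ f ∈ filt F n (p 1) (a 1) (d : ℤ), (G 0).mulVec f = c)
    (hmid : ∀ d : ℕ, ∀ i, i + 2 ≤ l → ∀ f ∈ filt F n (p (i+1)) (a (i+1)) (d : ℤ),
      (G i).mulVec f = 0 →
        ∃ y ∈ filt F n (p (i+2)) (a (i+2)) (d : ℤ), (G (i+1)).mulVec y = f)
    (hinj : ∀ d : ℕ, ∀ i, i + 1 = l → ∀ f ∈ filt F n (p (i+1)) (a (i+1)) (d : ℤ),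
      (G i).mulVec f = 0 → f = 0) :
    ∀ d : ℕ,
      (Module.finrank F (codeLE F n (p 0) C (d : ℤ)) : ℤ) =
        ∑ i ∈ Finset.range l, (-1) ^ i *
          ∑ j : Fin (p (i+1)),
            if a (i+1) j ≤ d then ((d - a (i+1) j + n).choose n : ℤ) else 0 := by
  intro d
  let φ i := (G i).mulVecLin.restrictScalars F
  let V i := filt F n (p (i + 1)) (a (i + 1)) d
  let K i := V i ⊓ LinearMap.ker (φ i)
  have hφ : ∀ i, i + 1 ≤ l → ∀ f ∈ V i, φ i f ∈ filt F n (p i) (a i) d := fun i hi _ hf =>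
    mulVec_mem_filt (G i) (fun j => (harec i hi j).ge) hf
  have h_first : (V 0).map (φ 0) = codeLE F n (p 0) C d := by
    refine le_antisymm (Submodule.map_le_iff_le_comap.2 fun f hf => ⟨hC ▸ ⟨f, rfl⟩, ?_⟩)
      fun c hc => hsurj d c hc
    have h := hφ 0 hl f hf
    rwa [show a 0 = fun _ => 0 from funext ha0] at h
  have h_mid : ∀ i, i + 2 ≤ l → (V (i + 1)).map (φ (i + 1)) = K i := fun i hi =>
    le_antisymm (Submodule.map_le_iff_le_comap.2 fun f hf => ⟨hφ (i + 1) hi f hf, hcomplex i hi f⟩)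
      fun f hf => hmid d i hi f hf.1 hf.2
  have h_last : K (l - 1) = ⊥ := (Submodule.eq_bot_iff _).2 fun f hf =>
    hinj d (l - 1) (by omega) f hf.1 hf.2
  have h_first_dim : finrank F (V 0) = finrank F (codeLE F n (p 0) C d) + finrank F (K 0) := by
    rw [← h_first, ← (V 0).finrank_map_add_finrank_inf_ker (φ 0)]
  have h_mid_dim : ∀ i, i + 2 ≤ l →
      finrank F (V (i + 1)) = finrank F (K i) + finrank F (K (i + 1)) := fun i hi => by
    rw [← h_mid i hi, ← (V (i + 1)).finrank_map_add_finrank_inf_ker (φ (i + 1))]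
  have h_euler := sum_range_neg_one_pow_mul_eq_add (W := fun i => (finrank F (V i) : ℤ))
    (K := fun i => finrank F (K i)) (c := finrank F (codeLE F n (p 0) C d)) (m := l - 1)
    (by exact_mod_cast h_first_dim)
    fun i hi => by exact_mod_cast h_mid_dim i (by omega)
  rw [h_last, finrank_bot, Nat.sub_add_cancel hl] at h_euler
  simp only [V, finrank_filt, Nat.cast_sum, Nat.cast_ite, Nat.cast_zero, mul_zero, add_zero]
    at h_euler
  exact h_euler.symm

/-- Hilbert function of a code from a PD resolution.  Let
`(G_l, …, G_1)` be a polynomial complex (here `G i` is the matrix `G_{i+1}`, of size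
`p i × p (i+1)`, with `p 0 = q`), with no zero columns, whose column degree table
`(a_l, …, a_1)` is defined recursively by `a_0 = 0`, `a_{i+1} = deg_{a_i}(G_{i+1})`.
Assume it has the PD property, i.e. for every `d ≥ 0` the sequence
`0 → S^{p_l}[-a_l]_{≤d} → ⋯ → S^{p_1}[-a_1]_{≤d} → C_{≤d} → 0` is exact.  Then
`HF(C,d) = dim_F C_{≤d} = Σ_{i=1}^{l} (−1)^{i−1} Σ_j C(d − a_i(j) + n, n)`,
the binomial coefficient being `0` when `d − a_i(j) < 0`. -/
theorem hilbert_function_formula (F : Type) [Field F] (n : ℕ)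
    (l : ℕ) (hl : 1 ≤ l) (p : ℕ → ℕ)
    (G : ∀ i : ℕ, Matrix (Fin (p i)) (Fin (p (i+1))) (MvPolynomial (Fin n) F))
    (a : ∀ i : ℕ, Fin (p i) → ℕ)
    (ha0 : ∀ j, a 0 j = 0)
    (harec : ∀ i, i + 1 ≤ l → ∀ j, a (i+1) j = colDeg (a i) (G i) j)
    (hnz : ∀ i, i + 1 ≤ l → ∀ j, ∃ r, G i r j ≠ 0)
    (hcomplex : ∀ i, i + 2 ≤ l → ∀ y, (G i).mulVec ((G (i+1)).mulVec y) = 0)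
    (C : Submodule (MvPolynomial (Fin n) F) (Fin (p 0) → MvPolynomial (Fin n) F))
    (hC : LinearMap.range (G 0).mulVecLin = C)
    (hsurj : ∀ d : ℕ, ∀ c ∈ codeLE F n (p 0) C (d : ℤ),
      ∃ f ∈ filt F n (p 1) (a 1) (d : ℤ), (G 0).mulVec f = c)
    (hmid : ∀ d : ℕ, ∀ i, i + 2 ≤ l → ∀ f ∈ filt F n (p (i+1)) (a (i+1)) (d : ℤ),
      (G i).mulVec f = 0 →
        ∃ y ∈ filt F n (p (i+2)) (a (i+2)) (d : ℤ), (G (i+1)).mulVec y = f)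
    (hinj : ∀ d : ℕ, ∀ i, i + 1 = l → ∀ f ∈ filt F n (p (i+1)) (a (i+1)) (d : ℤ),
      (G i).mulVec f = 0 → f = 0) :
    ∀ d : ℕ,
      (Module.finrank F (codeLE F n (p 0) C (d : ℤ)) : ℤ) =
        ∑ i ∈ Finset.range l, (-1) ^ i *
          ∑ j : Fin (p (i+1)),
            if a (i+1) j ≤ d then ((d - a (i+1) j + n).choose n : ℤ) else 0 :=
  hilbert_function_formula_general F n l hl p G a ha0 harec hcomplex C hC hsurj hmid hinj
end
end

section
/- Let S = F[D] (one variable), G ∈ S^{q×p} a matrix of full column rank p with column degree function a, and suppose the leading coefficient matrix of G has full column rank. Then for every d ≥ 0, the map f ↦ Gf is an F-linear bijection from S^p[-a]_{≤d} = { f ∈ S^p : a(j) + deg f_j ≤ d for all j } onto C_{≤d} = Im(G) ∩ S^q_{≤d}. -/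
noncomputable section

/-- The column degree function of a univariate polynomial matrix `G`:
`a j = max_i deg (G i j)`. -/
def colDeg1 {F : Type} [Field F] {q p : ℕ}
    (G : Matrix (Fin q) (Fin p) (Polynomial F)) (j : Fin p) : ℕ :=
  Finset.univ.sup fun i => (G i j).natDegree

/-- The leading coefficient matrix of `G`. -/
def leadCoeffMatrix {F : Type} [Field F] {q p : ℕ}
    (G : Matrix (Fin q) (Fin p) (Polynomial F)) : Matrix (Fin q) (Fin p) F :=
  fun i j => (G i j).coeff (colDeg1 G j)

/-! The predictable degree property: if the leading coefficient matrix `L` of `G` has full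
column rank, then `max_i deg (G f)_i = max_j (a j + deg f_j)`. Writing `n` for the right-hand
side, the coefficient of `D^n` in `G f` is `L c`, where `c j` is the coefficient of
`D^(n - a j)` in `f j`; `c` is nonzero at a column attaining the maximum, so `L c ≠ 0`.
Hence `G f` has degree `≤ d` exactly when `a j + deg f_j ≤ d` for all `j`, and `G f = 0` forces
`f = 0`. -/

open Polynomial Finset Matrix

section PredictableDegree

variable {F : Type} [Field F] {q p : ℕ} (G : Matrix (Fin q) (Fin p) F[X])

theorem natDegree_le_colDeg1 (i : Fin q) (j : Fin p) : (G i j).natDegree ≤ colDeg1 G j :=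
  le_sup (f := fun i => (G i j).natDegree) (mem_univ i)

theorem degree_le_colDeg1 (i : Fin q) (j : Fin p) : (G i j).degree ≤ colDeg1 G j :=
  degree_le_natDegree.trans (by exact_mod_cast natDegree_le_colDeg1 G i j)

theorem coeff_mulVec_eq_leadCoeffMatrix_mulVec {f : Fin p → F[X]} {n : ℕ}
    (hf : ∀ j, (colDeg1 G j : WithBot ℕ) + (f j).degree ≤ n) (i : Fin q) :
    ((G *ᵥ f) i).coeff n = (leadCoeffMatrix G *ᵥ fun j => (f j).coeff (n - colDeg1 G j)) i := by
  simp only [mulVec, dotProduct, finsetSum_coeff, leadCoeffMatrix]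
  refine sum_congr rfl fun j _ => ?_
  rcases eq_or_ne (f j) 0 with hfj | hfj
  · simp [hfj]
  have hle : colDeg1 G j + (f j).natDegree ≤ n := by
    have := hf j
    rw [degree_eq_natDegree hfj] at this
    exact_mod_cast this
  conv_lhs => rw [show n = colDeg1 G j + (n - colDeg1 G j) by omega]
  exact coeff_mul_add_eq_of_natDegree_le (natDegree_le_colDeg1 G i j) (by omega)

theorem sup_degree_mulVec_le (f : Fin p → F[X]) :
    univ.sup (fun i => ((G *ᵥ f) i).degree) ≤
      univ.sup (fun j => (colDeg1 G j : WithBot ℕ) + (f j).degree) := by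
  refine Finset.sup_le fun i _ => ?_
  refine (degree_sum_le univ fun j => G i j * f j).trans (Finset.sup_le fun j _ => ?_)
  calc (G i j * f j).degree ≤ (G i j).degree + (f j).degree := degree_mul_le _ _
    _ ≤ (colDeg1 G j : WithBot ℕ) + (f j).degree := by gcongr; exact degree_le_colDeg1 G i j
    _ ≤ _ := le_sup (f := fun j => (colDeg1 G j : WithBot ℕ) + (f j).degree) (mem_univ j)

theorem sup_degree_mulVec (hlc : Function.Injective (leadCoeffMatrix G).mulVec)
    (f : Fin p → F[X]) :
    univ.sup (fun i => ((G *ᵥ f) i).degree) =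
      univ.sup (fun j => (colDeg1 G j : WithBot ℕ) + (f j).degree) := by
  refine le_antisymm (sup_degree_mulVec_le G f) ?_
  set N := univ.sup (fun j => (colDeg1 G j : WithBot ℕ) + (f j).degree) with hN_def
  obtain hN | hN := eq_or_ne N ⊥
  · rw [hN]; exact bot_le
  obtain ⟨n, hn⟩ := WithBot.ne_bot_iff_exists.mp hN
  rw [← Nat.cast_withBot] at hn
  have hne : (univ : Finset (Fin p)).Nonempty := by
    by_contra h
    simp [N, not_nonempty_iff_eq_empty.mp h] at hN
  obtain ⟨j₀, -, hj₀⟩ := exists_mem_eq_sup univ hne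
    (fun j => (colDeg1 G j : WithBot ℕ) + (f j).degree)
  rw [← hN_def, ← hn] at hj₀
  have hfj₀ : f j₀ ≠ 0 := by
    intro h
    simp [h] at hj₀
  have hdeg₀ : colDeg1 G j₀ + (f j₀).natDegree = n := by
    rw [degree_eq_natDegree hfj₀] at hj₀
    exact_mod_cast hj₀.symm
  have hc : (fun j => (f j).coeff (n - colDeg1 G j)) ≠ 0 := by
    refine Function.ne_iff.mpr ⟨j₀, ?_⟩
    rw [Pi.zero_apply, ← hdeg₀, Nat.add_sub_cancel_left]
    exact mt leadingCoeff_eq_zero.mp hfj₀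
  obtain ⟨i, hi⟩ := Function.ne_iff.mp (hlc.ne hc |>.trans_eq (mulVec_zero _))
  have hle_n : ∀ j, (colDeg1 G j : WithBot ℕ) + (f j).degree ≤ n := fun j =>
    hn ▸ le_sup (f := fun j => (colDeg1 G j : WithBot ℕ) + (f j).degree) (mem_univ j)
  rw [← coeff_mulVec_eq_leadCoeffMatrix_mulVec G hle_n] at hi
  rw [← hn]
  exact (le_degree_of_ne_zero hi).trans (le_sup (f := fun i => ((G *ᵥ f) i).degree) (mem_univ i))

theorem degree_mulVec_le_iff (hlc : Function.Injective (leadCoeffMatrix G).mulVec)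
    (f : Fin p → F[X]) (d : WithBot ℕ) :
    (∀ i, ((G *ᵥ f) i).degree ≤ d) ↔ ∀ j, (colDeg1 G j : WithBot ℕ) + (f j).degree ≤ d := by
  simpa only [Finset.sup_le_iff, mem_univ, true_imp_iff] using
    (congrArg (· ≤ d) (sup_degree_mulVec G hlc f)).to_iff

theorem injective_mulVec_of_injective_leadCoeffMatrix
    (hlc : Function.Injective (leadCoeffMatrix G).mulVec) : Function.Injective G.mulVec := by
  intro f g hfg
  have hdeg := (degree_mulVec_le_iff G hlc (f - g) ⊥).mp fun i => by
    simp [mulVec_sub, hfg]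
  funext j
  simpa [sub_eq_zero] using hdeg j

end PredictableDegree

theorem reduced_matrix_level_bijection_general (F : Type) [Field F] (q p : ℕ)
    (G : Matrix (Fin q) (Fin p) (Polynomial F))
    (hlc : Function.Injective ((leadCoeffMatrix G).mulVec : (Fin p → F) → Fin q → F)) :
    ∀ d : ℕ,
      Set.BijOn G.mulVec
        {f : Fin p → Polynomial F |
          ∀ j, ((colDeg1 G j : ℕ) : WithBot ℕ) + (f j).degree ≤ (d : WithBot ℕ)}
        {g : Fin q → Polynomial F |
          (∃ f, G.mulVec f = g) ∧ ∀ i, (g i).degree ≤ (d : WithBot ℕ)} := by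
  intro d
  refine ⟨fun f hf => ⟨⟨f, rfl⟩, (degree_mulVec_le_iff G hlc f d).mpr hf⟩,
    (injective_mulVec_of_injective_leadCoeffMatrix G hlc).injOn, ?_⟩
  rintro g ⟨⟨f, rfl⟩, hg⟩
  exact ⟨f, (degree_mulVec_le_iff G hlc f d).mp hg, rfl⟩

/-- let `S = F[D]`, `G ∈ S^{q×p}` a matrix of full column rank with
column degree function `a`, whose leading coefficient matrix has full column rank.
Then for every `d ≥ 0`, `f ↦ G f` is a bijection from
`S^p[-a]_{≤d} = { f : a j + deg f_j ≤ d ∀j }` onto `C_{≤d} = Im(G) ∩ S^q_{≤d}`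
(degrees in `WithBot ℕ`, so the zero polynomial satisfies every bound). -/
theorem reduced_matrix_level_bijection (F : Type) [Field F] (q p : ℕ)
    (G : Matrix (Fin q) (Fin p) (Polynomial F))
    (hnz : ∀ j, ∃ i, G i j ≠ 0)
    (hfc : Function.Injective (G.mulVec : (Fin p → Polynomial F) → Fin q → Polynomial F))
    (hlc : Function.Injective ((leadCoeffMatrix G).mulVec : (Fin p → F) → Fin q → F)) :
    ∀ d : ℕ,
      Set.BijOn G.mulVec
        {f : Fin p → Polynomial F |
          ∀ j, ((colDeg1 G j : ℕ) : WithBot ℕ) + (f j).degree ≤ (d : WithBot ℕ)}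
        {g : Fin q → Polynomial F |
          (∃ f, G.mulVec f = g) ∧ ∀ i, (g i).degree ≤ (d : WithBot ℕ)} :=
  reduced_matrix_level_bijection_general F q p G hlc
end
end
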